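/- For a balanced game, every forward orbit of the cohesion flow converges to the core: for each x ∈ X, the solution γ_x of γ' = φ(γ), γ(0) = x, satisfies dist(γ_x(t), C(v)) → 0 as t → ∞. -/

import Mathlib

open Finset
open scoped RealInnerProductSpace

noncomputable section
variable {N : Type*} [Fintype N] [DecidableEq N]

/-- Indicator vector of a coalition. -/
def indic (S : Finset N) : EuclideanSpace ℝ N := WithLp.toLp 2 (fun i => if i ∈ S then (1:ℝ) else 0)

/-- η^S = 1^S - (s/n)·1^N. -/
def eta (S : Finset N) : EuclideanSpace ℝ N :=
  WithLp.toLp 2 (fun i => (if i ∈ S then (1:ℝ) else 0) - (S.card : ℝ) / (Fintype.card N))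

/-- Excess e_S(x) = v(S) - x(S). -/
def excess (v : Finset N → ℝ) (S : Finset N) (x : EuclideanSpace ℝ N) : ℝ :=
  v S - ∑ i ∈ S, x i

/-- Dissatisfaction field ϑ. -/
def dissat (v : Finset N → ℝ) (x : EuclideanSpace ℝ N) : ℝ :=
  (1/2) * ∑ S ∈ univ.filter (· ≠ (∅ : Finset N)), (max 0 (excess v S x))^2

/-- Cohesion field φ. -/
def phi (v : Finset N → ℝ) (x : EuclideanSpace ℝ N) : EuclideanSpace ℝ N :=
  ∑ S ∈ univ.filter (· ≠ (∅ : Finset N)), max 0 (excess v S x) • eta S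

/-- The core. -/
def core (v : Finset N → ℝ) : Set (EuclideanSpace ℝ N) :=
  {x | (∑ i, x i) = 0 ∧ ∀ S : Finset N, S.Nonempty → excess v S x ≤ 0}

/-- A balanced collection of (nonempty) coalitions. -/
def IsBalancedColl (B : Finset (Finset N)) : Prop :=
  (∀ S ∈ B, S.Nonempty) ∧
    ∃ lam : Finset N → ℝ, (∀ S ∈ B, 0 < lam S) ∧
      ∑ S ∈ B, lam S • indic S = indic (univ : Finset N)

/-- Outvoting relation. -/
def Outvotes (v : Finset N → ℝ) (x y : EuclideanSpace ℝ N) : Prop :=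
  ∃ S : Finset N, S.Nonempty ∧ 0 ≤ excess v S x ∧ (∀ i ∈ S, y i < x i) ∧
    ∀ T : Finset N, T.Nonempty → ¬ T ⊆ S → v T ≤ ∑ i ∈ T, x i

/-!
For a core point `z` and `y ∈ X`, `⟪y - z, φ y⟫ = ∑_S max(0, e_S(y)) (e_S(z) - e_S(y)) ≤ -2 ϑ y`,
because `⟪w, η^S⟫ = w(S)` on `X` and `e_S(z) ≤ 0`. Along an orbit the distance to every core point,
hence to the core, is therefore nonincreasing, and `‖γ t - z‖²` decreases at rate at least `4 ϑ (γ t)`,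
so `ϑ` cannot stay above a fixed `δ > 0` forever. The orbit stays in a compact subset of `X`, on which
`ϑ` has a positive minimum away from the `ε`-neighbourhood of the core; hence the orbit eventually
enters every such neighbourhood.
-/

open Metric Filter Set

theorem norm_sub_sq_sub_le_of_inner_le {E : Type*} [NormedAddCommGroup E] [InnerProductSpace ℝ E]
    {γ γ' : ℝ → E} {z : E} {c a b : ℝ} (hγ : ∀ t, HasDerivAt γ (γ' t) t)
    (h : ∀ t ∈ Icc a b, ⟪γ t - z, γ' t⟫ ≤ -c) (hab : a ≤ b) :
    ‖γ b - z‖ ^ 2 - ‖γ a - z‖ ^ 2 ≤ -(2 * c) * (b - a) := by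
  have hderiv : ∀ t, HasDerivAt (fun t => ‖γ t - z‖ ^ 2) (2 * ⟪γ t - z, γ' t⟫) t :=
    fun t => ((hγ t).sub_const z).norm_sq
  refine (convex_Icc a b).image_sub_le_mul_sub_of_deriv_le
    (fun t _ => (hderiv t).continuousAt.continuousWithinAt)
    (fun t _ => (hderiv t).differentiableAt.differentiableWithinAt) (fun t ht => ?_)
    a (left_mem_Icc.2 hab) b (right_mem_Icc.2 hab) hab
  rw [(hderiv t).deriv]
  linarith [h t (interior_subset ht)]

theorem antitone_infDist_of_antitone_dist {α : Type*} [PseudoMetricSpace α] {f : ℝ → α}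
    {s : Set α} (hs : s.Nonempty) (h : ∀ z ∈ s, Antitone fun t => dist (f t) z) :
    Antitone fun t => infDist (f t) s := by
  intro a b hab
  by_contra! hlt
  obtain ⟨z, hz, hdist⟩ := (infDist_lt_iff hs).1 hlt
  linarith [infDist_le_dist_of_mem (x := f b) hz, h z hz hab]

theorem inner_eta {y : EuclideanSpace ℝ N} (hy : ∑ i, y i = 0) (S : Finset N) :
    ⟪y, eta S⟫ = ∑ i ∈ S, y i := by
  simp only [PiLp.inner_apply, RCLike.inner_apply, conj_trivial, eta, sub_mul,
    ite_mul, one_mul, zero_mul, Finset.sum_sub_distrib, Finset.sum_ite_mem, Finset.univ_inter]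
  rw [← Finset.mul_sum, hy, mul_zero, sub_zero]

theorem dissat_nonneg (v : Finset N → ℝ) (x : EuclideanSpace ℝ N) : 0 ≤ dissat v x := by
  unfold dissat
  positivity

theorem continuous_dissat (v : Finset N → ℝ) : Continuous (dissat (N := N) v) := by
  unfold dissat excess
  fun_prop

theorem mem_core_of_dissat_eq_zero {v : Finset N → ℝ} {x : EuclideanSpace ℝ N}
    (hx : ∑ i, x i = 0) (h : dissat v x = 0) : x ∈ core v := by
  refine ⟨hx, fun S hS => ?_⟩
  have hsum : ∑ S ∈ univ.filter (· ≠ (∅ : Finset N)), (max 0 (excess v S x)) ^ 2 = 0 := by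
    unfold dissat at h
    linarith
  have hS' : S ∈ univ.filter (· ≠ (∅ : Finset N)) := by simpa using hS.ne_empty
  have hterm := (Finset.sum_eq_zero_iff_of_nonneg (fun S _ => sq_nonneg _)).1 hsum S hS'
  simpa using hterm

theorem inner_sub_phi_le {v : Finset N → ℝ} {x z : EuclideanSpace ℝ N} (hx : ∑ i, x i = 0)
    (hz : z ∈ core v) : ⟪x - z, phi v x⟫ ≤ -(2 * dissat v x) := by
  have hxz : ∑ i, (x - z) i = 0 := by simp [Finset.sum_sub_distrib, hx, hz.1]
  have hterm : ∀ S ∈ univ.filter (· ≠ (∅ : Finset N)),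
      ⟪x - z, max 0 (excess v S x) • eta S⟫ ≤ -(max 0 (excess v S x)) ^ 2 := by
    intro S hS
    have hSz : excess v S z ≤ 0 := hz.2 S (Finset.nonempty_iff_ne_empty.2 (by simpa using hS))
    have hsum : ∑ i ∈ S, (x - z) i = excess v S z - excess v S x := by
      simp only [PiLp.sub_apply, Finset.sum_sub_distrib, excess]
      ring
    rw [real_inner_smul_right, inner_eta hxz, hsum]
    rcases le_total (excess v S x) 0 with hneg | hpos
    · simp [max_eq_left hneg]
    · rw [max_eq_right hpos]
      nlinarith
  calc ⟪x - z, phi v x⟫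
      = ∑ S ∈ univ.filter (· ≠ (∅ : Finset N)), ⟪x - z, max 0 (excess v S x) • eta S⟫ :=
        inner_sum _ _ _
    _ ≤ ∑ S ∈ univ.filter (· ≠ (∅ : Finset N)), -(max 0 (excess v S x)) ^ 2 :=
        Finset.sum_le_sum hterm
    _ = -(2 * dissat v x) := by rw [dissat, Finset.sum_neg_distrib]; ring

theorem exists_pos_le_dissat (v : Finset N → ℝ) (z : EuclideanSpace ℝ N) (R : ℝ) {ε : ℝ}
    (hε : 0 < ε) : ∃ δ > 0, ∀ y : EuclideanSpace ℝ N, ∑ i, y i = 0 → dist y z ≤ R →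
      ε ≤ infDist y (core v) → δ ≤ dissat v y := by
  set K := {y : EuclideanSpace ℝ N | ∑ i, y i = 0} ∩ closedBall z R ∩
    {y | ε ≤ infDist y (core v)}
  have hK : IsCompact K := by
    refine isCompact_of_isClosed_isBounded ?_ (isBounded_closedBall.subset fun y hy => hy.1.2)
    refine (IsClosed.inter ?_ isClosed_closedBall).inter ?_
    · exact isClosed_eq (by fun_prop) continuous_const
    · exact isClosed_le continuous_const (continuous_infDist_pt _)
  rcases K.eq_empty_or_nonempty with hKe | hKne
  · refine ⟨1, one_pos, fun y h1 h2 h3 => ?_⟩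
    exact absurd (show y ∈ K from ⟨⟨h1, h2⟩, h3⟩) (hKe ▸ Set.notMem_empty y)
  obtain ⟨y₀, ⟨⟨hy₀X, -⟩, hy₀ε⟩, hmin⟩ := hK.exists_isMinOn hKne (continuous_dissat v).continuousOn
  refine ⟨dissat v y₀, (dissat_nonneg v y₀).lt_of_ne fun h => ?_,
    fun y h1 h2 h3 => hmin ⟨⟨h1, h2⟩, h3⟩⟩
  have := infDist_zero_of_mem (mem_core_of_dissat_eq_zero hy₀X h.symm)
  linarith [show ε ≤ infDist y₀ (core v) from hy₀ε]

section Orbit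

variable {v : Finset N → ℝ} {γ : ℝ → EuclideanSpace ℝ N}
  (hγX : ∀ t, ∑ i, γ t i = 0) (hγ : ∀ t, HasDerivAt γ (phi v (γ t)) t)
include hγX hγ

theorem antitone_dist_orbit {z : EuclideanSpace ℝ N} (hz : z ∈ core v) :
    Antitone fun t => dist (γ t) z := by
  intro a b hab
  have hsq := norm_sub_sq_sub_le_of_inner_le (c := 0) hγ
    (fun t _ => (inner_sub_phi_le (hγX t) hz).trans (by linarith [dissat_nonneg v (γ t)])) hab
  simp only [dist_eq_norm]
  nlinarith [norm_nonneg (γ a - z), norm_nonneg (γ b - z)]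

theorem exists_dissat_orbit_lt {z : EuclideanSpace ℝ N} (hz : z ∈ core v) {δ : ℝ} (hδ : 0 < δ) :
    ∃ t ≥ 0, dissat v (γ t) < δ := by
  by_contra! hge
  set T := (‖γ 0 - z‖ ^ 2 + 1) / (4 * δ)
  have hT : 0 ≤ T := by positivity
  have hsq := norm_sub_sq_sub_le_of_inner_le (c := 2 * δ) hγ
    (fun t ht => (inner_sub_phi_le (hγX t) hz).trans (by linarith [hge t ht.1])) hT
  have hδT : 4 * δ * T = ‖γ 0 - z‖ ^ 2 + 1 := mul_div_cancel₀ _ (by positivity)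
  nlinarith [sq_nonneg ‖γ T - z‖]

end Orbit

theorem stmt_18_general (v : Finset N → ℝ)
    (hbal : (core v).Nonempty)
    (γ : ℝ → EuclideanSpace ℝ N) (hγX : ∀ t, (∑ i, γ t i) = 0)
    (hγ : ∀ t, HasDerivAt γ (phi v (γ t)) t) :
    Filter.Tendsto (fun t => Metric.infDist (γ t) (core v)) Filter.atTop (nhds 0) := by
  have hanti := antitone_infDist_of_antitone_dist hbal fun z hz => antitone_dist_orbit hγX hγ hz
  obtain ⟨z, hz⟩ := hbal
  refine tendsto_order.2 ⟨fun a ha => Eventually.of_forall fun t => ha.trans_le infDist_nonneg,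
    fun ε hε => ?_⟩
  obtain ⟨δ, hδ, hlow⟩ := exists_pos_le_dissat v z (dist (γ 0) z) hε
  obtain ⟨t, ht, hsmall⟩ := exists_dissat_orbit_lt hγX hγ hz hδ
  have hclose : infDist (γ t) (core v) < ε := by
    by_contra! hfar
    exact hsmall.not_ge (hlow _ (hγX t) (antitone_dist_orbit hγX hγ hz ht) hfar)
  exact eventually_atTop.2 ⟨t, fun s hs => (hanti hs).trans_lt hclose⟩

theorem stmt_18 [Nonempty N] (v : Finset N → ℝ) (hv : v univ = 0)
    (hbal : (core v).Nonempty) (x : EuclideanSpace ℝ N) (hx : (∑ i, x i) = 0)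
    (γ : ℝ → EuclideanSpace ℝ N) (hγX : ∀ t, (∑ i, γ t i) = 0)
    (h0 : γ 0 = x) (hγ : ∀ t, HasDerivAt γ (phi v (γ t)) t) :
    Filter.Tendsto (fun t => Metric.infDist (γ t) (core v)) Filter.atTop (nhds 0) :=
  stmt_18_general v hbal γ hγX hγ
end
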